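/- arXiv:1812.00458 — 3 statements merged into one kernel-verified Lean document; each statement's English description precedes it below -/
import Mathlib

section
/- For every n ∈ ℕ and δ ∈ (0, 1/2], the sum of binomial coefficients ∑_{0 ≤ i ≤ nδ} C(n, i) is at most 2^{n H(δ)}, where H(δ) = −δ log₂ δ − (1−δ) log₂(1−δ). -/
/-- Binomial tail bound: `∑_{0 ≤ i ≤ nδ} C(n,i) ≤ 2^{n H(δ)}` for `δ ∈ (0, 1/2]`. -/
theorem binomial_sum_le_entropy (n : ℕ) (hn : 1 ≤ n) (δ : ℝ)
    (hδ : δ ∈ Set.Ioc (0 : ℝ) (1 / 2)) :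
    (∑ i ∈ (Finset.range (n + 1)).filter (fun i : ℕ => (i : ℝ) ≤ (n : ℝ) * δ),
        (n.choose i : ℝ)) ≤
      2 ^ ((n : ℝ) * (-δ * Real.logb 2 δ - (1 - δ) * Real.logb 2 (1 - δ))) := by
  obtain ⟨ha0, ha2⟩ := hδ
  have hb0 : (0:ℝ) < 1 - δ := by linarith
  have hab : δ ≤ 1 - δ := by linarith
  have hr0 : 0 < δ / (1 - δ) := div_pos ha0 hb0
  have hr1 : δ / (1 - δ) ≤ 1 := (div_le_one hb0).2 hab
  set S := (Finset.range (n + 1)).filter (fun i : ℕ => (i : ℝ) ≤ (n : ℝ) * δ) with hS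
  set M : ℝ := δ ^ ((n:ℝ) * δ) * (1 - δ) ^ ((n:ℝ) * (1 - δ)) with hM
  have hM0 : 0 < M := mul_pos (Real.rpow_pos_of_pos ha0 _) (Real.rpow_pos_of_pos hb0 _)
  have key : ∀ i ∈ S, M ≤ δ ^ i * (1 - δ) ^ (n - i) := by
    intro i hi
    simp only [hS, Finset.mem_filter, Finset.mem_range] at hi
    obtain ⟨hin, hiδ⟩ := hi
    have hin' : i ≤ n := Nat.lt_succ_iff.mp hin
    have h1 : (δ / (1 - δ)) ^ ((n:ℝ) * δ) ≤ (δ / (1 - δ)) ^ (i:ℝ) :=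
      Real.rpow_le_rpow_of_exponent_ge hr0 hr1 hiδ
    have h2 : M = (1 - δ) ^ (n:ℝ) * (δ / (1 - δ)) ^ ((n:ℝ) * δ) := by
      rw [hM, Real.div_rpow ha0.le hb0.le, div_eq_mul_inv, ← Real.rpow_neg hb0.le,
        mul_comm ((1 - δ) ^ (n:ℝ)), mul_assoc, ← Real.rpow_add hb0]
      congr 1
      ring
    have h3 : (1 - δ) ^ (n:ℝ) * (δ / (1 - δ)) ^ (i:ℝ) = δ ^ i * (1 - δ) ^ (n - i) := by
      rw [Real.rpow_natCast, Real.rpow_natCast, div_pow]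
      have hpow : (1 - δ) ^ (n - i) * (1 - δ) ^ i = (1 - δ) ^ n := by
        rw [← pow_add]; congr 1; omega
      field_simp
      rw [← hpow]; ring
    calc M = (1 - δ) ^ (n:ℝ) * (δ / (1 - δ)) ^ ((n:ℝ) * δ) := h2
    _ ≤ (1 - δ) ^ (n:ℝ) * (δ / (1 - δ)) ^ (i:ℝ) :=
      mul_le_mul_of_nonneg_left h1 (Real.rpow_pos_of_pos hb0 _).le
    _ = δ ^ i * (1 - δ) ^ (n - i) := h3
  have hsum : (∑ i ∈ S, (n.choose i : ℝ)) * M ≤ 1 := by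
    rw [Finset.sum_mul]
    calc ∑ i ∈ S, (n.choose i : ℝ) * M
        ≤ ∑ i ∈ S, (n.choose i : ℝ) * (δ ^ i * (1 - δ) ^ (n - i)) :=
          Finset.sum_le_sum fun i hi =>
            mul_le_mul_of_nonneg_left (key i hi) (Nat.cast_nonneg _)
    _ ≤ ∑ i ∈ Finset.range (n + 1), (n.choose i : ℝ) * (δ ^ i * (1 - δ) ^ (n - i)) :=
          Finset.sum_le_sum_of_subset_of_nonneg (Finset.filter_subset _ _)
            (fun i _ _ => by positivity)
    _ = (δ + (1 - δ)) ^ n := by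
          rw [add_pow]
          exact Finset.sum_congr rfl fun i _ => by ring
    _ = 1 := by norm_num
  have hRHS : (2:ℝ) ^ ((n : ℝ) * (-δ * Real.logb 2 δ - (1 - δ) * Real.logb 2 (1 - δ))) = M⁻¹ := by
    rw [show (n:ℝ) * (-δ * Real.logb 2 δ - (1 - δ) * Real.logb 2 (1 - δ))
        = Real.logb 2 δ * (-((n:ℝ) * δ)) + Real.logb 2 (1 - δ) * (-((n:ℝ) * (1 - δ))) by ring,
      Real.rpow_add two_pos, Real.rpow_mul (by norm_num : (0:ℝ) ≤ 2),
      Real.rpow_mul (by norm_num : (0:ℝ) ≤ 2),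
      Real.rpow_logb two_pos (by norm_num) ha0,
      Real.rpow_logb two_pos (by norm_num) hb0, hM, mul_inv,
      ← Real.rpow_neg ha0.le, ← Real.rpow_neg hb0.le]
  rw [hRHS]
  calc (∑ i ∈ S, (n.choose i : ℝ)) ≤ 1 / M := (le_div_iff₀ hM0).2 hsum
  _ = M⁻¹ := one_div M
end

section
/- Let f : [0,1]^n → [0,1]^k be Borel, g : [0,1]^k → [0,1]^n be α-Hölder with constant L (in the sup norm), and suppose A = {x ∈ [0,1]^n : g(f(x)) = x}. Then the upper box-counting dimension of A is at most k/α. -/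
/-- The `ε`-covering number of `A`: the minimal cardinality of an open cover of `A`
by sets of diameter `< ε`. -/
noncomputable def coverNum {X : Type*} [PseudoMetricSpace X] (A : Set X) (ε : ℝ) : ℕ :=
  sInf {N : ℕ | ∃ U : Fin N → Set X,
    (∀ i, IsOpen (U i) ∧ Metric.diam (U i) < ε) ∧ A ⊆ ⋃ i, U i}

/-- Upper box-counting (Minkowski) dimension. -/
noncomputable def upperBoxDim {X : Type*} [PseudoMetricSpace X] (A : Set X) : ℝ :=
  Filter.limsup (fun ε : ℝ => Real.log (coverNum A ε) / Real.log (1 / ε))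
    (nhdsWithin (0 : ℝ) (Set.Ioi 0))

/-- The unit cube in dimension m. -/
def cube (m : ℕ) : Set (Fin m → ℝ) := {x | ∀ i, x i ∈ Set.Icc (0 : ℝ) 1}

/-! Every point of `A` equals `g (f x)` with `f x ∈ [0,1]^k`, so `A ⊆ g([0,1]^k)`. Cut `[0,1]^k`
into `(⌊1/r⌋ + 1)^k ≤ (2/r)^k` grid cells of side `r`, with `r` chosen so that `L r^α = ε/2`.
By the Hölder bound the image of each cell has diameter `< ε`, so slightly thickening these
images gives an admissible open cover of `A`. Hence `N(A, ε) ≤ C ε^(-k/α)`, and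
`log N(A, ε) / log(1/ε) ≤ log C / log(1/ε) + k/α → k/α`. -/

open Filter Metric Set Topology

section CoverNum

variable {X : Type*} [PseudoMetricSpace X]

lemma coverNum_le_card {A : Set X} {ε : ℝ} {ι : Type*} [Fintype ι] (U : ι → Set X)
    (hU : ∀ i, IsOpen (U i) ∧ diam (U i) < ε) (hA : A ⊆ ⋃ i, U i) :
    coverNum A ε ≤ Fintype.card ι :=
  Nat.sInf_le ⟨U ∘ (Fintype.equivFin ι).symm, fun _ => hU _,
    hA.trans ((Fintype.equivFin ι).symm.surjective.iUnion_comp U).superset⟩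

lemma coverNum_le_card_of_diam_lt {A : Set X} {ε : ℝ} {ι : Type*} [Fintype ι] (W : ι → Set X)
    (hW : ∀ i, diam (W i) < ε) (hA : A ⊆ ⋃ i, W i) :
    coverNum A ε ≤ Fintype.card ι := by
  set δ : ι → ℝ := fun i => (ε - diam (W i)) / 3
  have hδ : ∀ i, 0 < δ i := fun i => by have := hW i; simp only [δ]; linarith
  refine coverNum_le_card (fun i => thickening (δ i) (W i))
    (fun i => ⟨isOpen_thickening, ?_⟩) ?_
  · have := hW i
    have := diam_thickening_le (W i) (hδ i).le
    simp only [δ] at this ⊢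
    linarith
  · exact hA.trans (iUnion_mono fun i => self_subset_thickening (hδ i) _)

lemma coverNum_le_card_of_holderOn {Y : Type*} [PseudoMetricSpace Y] {g : X → Y} {S : Set X}
    {L α r ε : ℝ} (hL : 0 ≤ L) (hα : 0 ≤ α) (hr : 0 ≤ r)
    (hg : ∀ u ∈ S, ∀ v ∈ S, dist (g u) (g v) ≤ L * dist u v ^ α)
    {ι : Type*} [Fintype ι] (V : ι → Set X) (hV : ∀ i, ∀ u ∈ V i, ∀ v ∈ V i, dist u v ≤ r)
    (hS : S ⊆ ⋃ i, V i) (hε : L * r ^ α < ε) {A : Set Y} (hA : A ⊆ g '' S) :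
    coverNum A ε ≤ Fintype.card ι := by
  refine coverNum_le_card_of_diam_lt (fun i => g '' (V i ∩ S)) (fun i => ?_) ?_
  · refine (diam_le_of_forall_dist_le (by positivity) ?_).trans_lt hε
    rintro _ ⟨u, ⟨huV, huS⟩, rfl⟩ _ ⟨v, ⟨hvV, hvS⟩, rfl⟩
    calc dist (g u) (g v) ≤ L * dist u v ^ α := hg u huS v hvS
      _ ≤ L * r ^ α := by gcongr; exact hV i u huV v hvV
  · rintro _ hx
    obtain ⟨u, huS, rfl⟩ := hA hx
    obtain ⟨i, huV⟩ := mem_iUnion.mp (hS huS)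
    exact mem_iUnion.mpr ⟨i, mem_image_of_mem g ⟨huV, huS⟩⟩

lemma upperBoxDim_le_of_coverNum_le {A : Set X} {d : ℝ} (hd : 0 ≤ d)
    (h : ∃ C, ∀ᶠ ε in 𝓝[>] 0, (coverNum A ε : ℝ) ≤ C * (1 / ε) ^ d) : upperBoxDim A ≤ d := by
  obtain ⟨C, h⟩ := h
  -- with `C' ≥ 1` the bound below is nonnegative, which covers `coverNum A ε = 0` (`log 0 = 0`)
  set C' := max C 1
  have hlog : Tendsto (fun ε : ℝ => Real.log (1 / ε)) (𝓝[>] 0) atTop := by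
    simpa only [one_div, Function.comp_def] using
      Real.tendsto_log_atTop.comp tendsto_inv_nhdsGT_zero
  have hv : Tendsto (fun ε => Real.log C' / Real.log (1 / ε) + d) (𝓝[>] 0) (𝓝 d) := by
    simpa using (tendsto_const_nhds.div_atTop hlog).add_const d
  have hlog_pos : ∀ᶠ ε in 𝓝[>] (0 : ℝ), 0 < Real.log (1 / ε) := hlog.eventually_gt_atTop 0
  have hle : ∀ᶠ ε in 𝓝[>] 0, Real.log (coverNum A ε) / Real.log (1 / ε) ≤
      Real.log C' / Real.log (1 / ε) + d := by
    filter_upwards [h, hlog_pos, self_mem_nhdsWithin] with ε hN hpos (hε : 0 < ε)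
    have hC'_pos : 0 < C' := one_pos.trans_le (le_max_right _ _)
    have hpow_pos : 0 < (1 / ε) ^ d := Real.rpow_pos_of_pos (one_div_pos.mpr hε) d
    rw [div_add' _ _ _ hpos.ne', div_le_div_iff_of_pos_right hpos]
    have hC' : 0 ≤ Real.log C' := Real.log_nonneg (le_max_right _ _)
    rcases (coverNum A ε).eq_zero_or_pos with h0 | h0
    · rw [h0, Nat.cast_zero, Real.log_zero]
      positivity
    · calc Real.log (coverNum A ε) ≤ Real.log (C' * (1 / ε) ^ d) :=
            Real.log_le_log (by exact_mod_cast h0)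
              (hN.trans (mul_le_mul_of_nonneg_right (le_max_left _ _) hpow_pos.le))
        _ = Real.log C' + d * Real.log (1 / ε) := by
            rw [Real.log_mul hC'_pos.ne' hpow_pos.ne', Real.log_rpow (one_div_pos.mpr hε)]
  have hcobdd : IsCoboundedUnder (· ≤ ·) (𝓝[>] 0)
      (fun ε => Real.log (coverNum A ε) / Real.log (1 / ε)) :=
    isCoboundedUnder_le_of_eventually_le _ (x := 0) <| by
      filter_upwards [hlog_pos] with ε hpos
      exact div_nonneg (Real.log_natCast_nonneg _) hpos.le
  exact (limsup_le_limsup hle hcobdd hv.isBoundedUnder_le).trans hv.limsup_eq.le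

end CoverNum

def gridCell {k m : ℕ} (r : ℝ) (j : Fin k → Fin m) : Set (Fin k → ℝ) :=
  {u | ∀ i, u i ∈ Ico ((j i : ℕ) * r) (((j i : ℕ) + 1) * r)}

lemma dist_le_of_mem_gridCell {k m : ℕ} {r : ℝ} (hr : 0 ≤ r) {j : Fin k → Fin m}
    {u v : Fin k → ℝ} (hu : u ∈ gridCell r j) (hv : v ∈ gridCell r j) : dist u v ≤ r := by
  refine (dist_pi_le_iff hr).mpr fun i => ?_
  have hui := hu i
  have hvi := hv i
  simp only [mem_Ico, add_mul, one_mul] at hui hvi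
  rw [Real.dist_eq, abs_sub_le_iff]
  constructor <;> linarith

lemma cube_subset_iUnion_gridCell (k : ℕ) {r : ℝ} (hr : 0 < r) :
    cube k ⊆ ⋃ j : Fin k → Fin (⌊1 / r⌋₊ + 1), gridCell r j := by
  intro u hu
  have hfloor : ∀ i, ⌊u i / r⌋₊ < ⌊1 / r⌋₊ + 1 := fun i =>
    Nat.lt_succ_of_le (Nat.floor_le_floor (by gcongr; exact (hu i).2))
  refine mem_iUnion.mpr ⟨fun i => ⟨⌊u i / r⌋₊, hfloor i⟩, fun i => ⟨?_, ?_⟩⟩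
  · rw [← le_div_iff₀ hr]
    exact Nat.floor_le (div_nonneg (hu i).1 hr.le)
  · rw [← div_lt_iff₀ hr]
    exact Nat.lt_floor_add_one _

lemma coverNum_le_of_holderOn_cube {Y : Type*} [PseudoMetricSpace Y] {k : ℕ}
    {g : (Fin k → ℝ) → Y} {L α ε : ℝ} (hL : 0 < L) (hα : 0 < α)
    (hg : ∀ u ∈ cube k, ∀ v ∈ cube k, dist (g u) (g v) ≤ L * dist u v ^ α)
    (hε : 0 < ε) (hεL : ε ≤ 2 * L) {A : Set Y} (hA : A ⊆ g '' cube k) :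
    (coverNum A ε : ℝ) ≤ (2 * (2 * L) ^ α⁻¹) ^ k * (1 / ε) ^ ((k : ℝ) / α) := by
  have hbase : 0 < ε / (2 * L) := by positivity
  set r := (ε / (2 * L)) ^ α⁻¹
  have hr : 0 < r := Real.rpow_pos_of_pos hbase _
  have hr_le : r ≤ 1 :=
    Real.rpow_le_one hbase.le ((div_le_one (by positivity)).mpr hεL) (inv_nonneg.mpr hα.le)
  have hLr : L * r ^ α < ε := by
    have : L * (ε / (2 * L)) = ε / 2 := by field_simp
    rw [Real.rpow_inv_rpow hbase.le hα.ne', this]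
    linarith
  have hN := coverNum_le_card_of_holderOn hL.le hα.le hr.le hg _
    (fun _ _ hu _ hv => dist_le_of_mem_gridCell hr.le hu hv) (cube_subset_iUnion_gridCell k hr)
    hLr hA
  rw [Fintype.card_fun, Fintype.card_fin, Fintype.card_fin] at hN
  have hm : (⌊1 / r⌋₊ + 1 : ℝ) ≤ 2 / r := by
    have := Nat.floor_le (one_div_pos.mpr hr).le
    have := one_le_one_div hr hr_le
    rw [div_eq_mul_one_div 2 r]
    linarith
  have hr_inv : 1 / r = (2 * L) ^ α⁻¹ * (1 / ε) ^ α⁻¹ := by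
    rw [one_div, ← Real.inv_rpow hbase.le, inv_div, div_eq_mul_one_div,
      Real.mul_rpow (by positivity) (by positivity)]
  calc (coverNum A ε : ℝ) ≤ (⌊1 / r⌋₊ + 1 : ℝ) ^ k := by exact_mod_cast hN
    _ ≤ (2 / r) ^ k := by gcongr
    _ = (2 * (2 * L) ^ α⁻¹) ^ k * (1 / ε) ^ ((k : ℝ) / α) := by
      rw [div_eq_mul_one_div 2 r, hr_inv, ← mul_assoc, mul_pow,
        ← Real.rpow_natCast ((1 / ε) ^ α⁻¹) k, ← Real.rpow_mul (by positivity), inv_mul_eq_div]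

theorem upperBoxDim_fixed_set_le_general (n k : ℕ) (L α : ℝ) (hL : 0 < L)
    (hα : α ∈ Set.Ioc (0 : ℝ) 1)
    (f : (Fin n → ℝ) → (Fin k → ℝ))
    (hfmap : ∀ x ∈ cube n, f x ∈ cube k)
    (g : (Fin k → ℝ) → (Fin n → ℝ))
    (hg : ∀ u ∈ cube k, ∀ v ∈ cube k, dist (g u) (g v) ≤ L * dist u v ^ α) :
    upperBoxDim {x | x ∈ cube n ∧ g (f x) = x} ≤ (k : ℝ) / α := by
  have hA : {x | x ∈ cube n ∧ g (f x) = x} ⊆ g '' cube k :=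
    fun x ⟨hx, hgfx⟩ => ⟨f x, hfmap x hx, hgfx⟩
  exact upperBoxDim_le_of_coverNum_le (div_nonneg k.cast_nonneg hα.1.le)
    ⟨_, eventually_of_mem (Ioo_mem_nhdsGT (by positivity : (0 : ℝ) < 2 * L)) fun ε hε =>
      coverNum_le_of_holderOn_cube hL hα.1 hg hε.1 hε.2.le hA⟩

/-- If `f : [0,1]^n → [0,1]^k` is Borel and `g : [0,1]^k → [0,1]^n` is `(L,α)`-Hölder
(sup norm), then the set `A = {x ∈ [0,1]^n : g (f x) = x}` has upper box dimension
at most `k / α`. -/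
theorem upperBoxDim_fixed_set_le (n k : ℕ) (L α : ℝ) (hL : 0 < L)
    (hα : α ∈ Set.Ioc (0 : ℝ) 1)
    (f : (Fin n → ℝ) → (Fin k → ℝ)) (hf : Measurable f)
    (hfmap : ∀ x ∈ cube n, f x ∈ cube k)
    (g : (Fin k → ℝ) → (Fin n → ℝ)) (hgmap : ∀ u ∈ cube k, g u ∈ cube n)
    (hg : ∀ u ∈ cube k, ∀ v ∈ cube k, dist (g u) (g v) ≤ L * dist u v ^ α) :
    upperBoxDim {x | x ∈ cube n ∧ g (f x) = x} ≤ (k : ℝ) / α :=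
  upperBoxDim_fixed_set_le_general n k L α hL hα f hfmap g hg
end

section
/- Let S ⊂ [0,1]^ℤ be the (N,K)-sparse subshift with 2K ≤ N, ℓ ∈ ℕ, n = ℓN, and set E = (ℝ^K × {0}^{N−K})^ℓ ∪ ({0}^{N−K} × ℝ^K)^ℓ ⊂ ℝ^n. If a linear map F : ℝ^n → ℝ^k is injective on E, then k ≥ 2ℓK. -/
/-- Sparse-signal linear compression lower bound: if a linear map
`F : ℝ^{ℓN} → ℝ^k` is injective on
`E = (ℝ^K × {0}^{N-K})^ℓ ∪ ({0}^{N-K} × ℝ^K)^ℓ` (with `2K ≤ N`), then `k ≥ 2ℓK`. -/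
theorem sparse_linear_injective_rank_bound (N K ℓ k : ℕ)
    (hK : 1 ≤ K) (hKN : 2 * K ≤ N) (hℓ : 1 ≤ ℓ)
    (F : (Fin (ℓ * N) → ℝ) →ₗ[ℝ] (Fin k → ℝ))
    (hinj : Set.InjOn F
      ({x : Fin (ℓ * N) → ℝ | ∀ i : Fin (ℓ * N), ¬ (i.val % N < K) → x i = 0} ∪
       {x : Fin (ℓ * N) → ℝ | ∀ i : Fin (ℓ * N), ¬ (N - K ≤ i.val % N) → x i = 0})) :
    2 * ℓ * K ≤ k := by
  classical
  have hKN' : K ≤ N := by omega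
  have hNpos : 0 < N := by omega
  -- offset of an index
  let off : Fin K ⊕ Fin K → ℕ := fun s => Sum.elim (fun r : Fin K => r.val)
    (fun r : Fin K => N - K + r.val) s
  have hoff_lt : ∀ s, off s < N := by
    rintro (r | r) <;> simp only [off, Sum.elim_inl, Sum.elim_inr] <;> omega
  let idx : Fin ℓ × (Fin K ⊕ Fin K) → Fin (ℓ * N) := fun p =>
    ⟨p.1.val * N + off p.2, by
      have h1 : p.1.val + 1 ≤ ℓ := p.1.isLt
      calc p.1.val * N + off p.2 < p.1.val * N + N := by
            exact Nat.add_lt_add_left (hoff_lt p.2) _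
        _ = (p.1.val + 1) * N := by ring
        _ ≤ ℓ * N := Nat.mul_le_mul_right N h1⟩
  have hmod : ∀ p, (idx p).val % N = off p.2 := by
    intro p
    show (p.1.val * N + off p.2) % N = off p.2
    rw [Nat.mul_add_mod', Nat.mod_eq_of_lt (hoff_lt p.2)]
  have hidx_inj : Function.Injective idx := by
    rintro ⟨q, s⟩ ⟨q', s'⟩ h
    have hm : off s = off s' := by
      have := congrArg (fun i : Fin (ℓ * N) => i.val % N) h
      simpa [hmod ⟨q, s⟩, hmod ⟨q', s'⟩] using this
    have hss : s = s' := by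
      rcases s with r | r <;> rcases s' with r' | r' <;>
        simp only [off, Sum.elim_inl, Sum.elim_inr] at hm
      · exact congrArg Sum.inl (Fin.ext hm)
      · exact absurd hm (by omega)
      · exact absurd hm (by omega)
      · exact congrArg Sum.inr (Fin.ext (by omega))
    have hv : q.val * N + off s = q'.val * N + off s' := congrArg Fin.val h
    have hq : q = q' := by
      apply Fin.ext
      rw [hm] at hv
      have := Nat.add_right_cancel hv
      exact Nat.eq_of_mul_eq_mul_right hNpos this
    rw [hq, hss]
  -- the linearly independent family
  have hli : LinearIndependent ℝ
      (fun p : Fin ℓ × (Fin K ⊕ Fin K) => F (Pi.single (idx p) (1:ℝ))) := by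
    rw [Fintype.linearIndependent_iff]
    intro g hg
    set a : Fin (ℓ * N) → ℝ :=
      ∑ p : Fin ℓ × Fin K, g (p.1, Sum.inl p.2) • (Pi.single (idx (p.1, Sum.inl p.2)) (1:ℝ) : Fin (ℓ * N) → ℝ)
      with ha_def
    set b : Fin (ℓ * N) → ℝ :=
      ∑ p : Fin ℓ × Fin K, g (p.1, Sum.inr p.2) • (Pi.single (idx (p.1, Sum.inr p.2)) (1:ℝ) : Fin (ℓ * N) → ℝ)
      with hb_def
    -- F a = F (-b)
    have hFab : F a = F (-b) := by
      have : F a + F b = 0 := by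
        rw [← map_add]
        have : a + b = ∑ p : Fin ℓ × (Fin K ⊕ Fin K),
            g p • (Pi.single (idx p) (1:ℝ) : Fin (ℓ * N) → ℝ) := by
          rw [ha_def, hb_def]
          simp only [Fintype.sum_prod_type, Fintype.sum_sum_type]
          rw [← Finset.sum_add_distrib]
        rw [this, map_sum]
        simpa [map_smul] using hg
      rw [map_neg]
      exact eq_neg_of_add_eq_zero_left this
    -- indices of inl-type and inr-type terms are always distinct
    have hne : ∀ (q q' : Fin ℓ) (r r' : Fin K),
        idx (q', Sum.inr r') ≠ idx (q, Sum.inl r) := by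
      intro q q' r r' h
      have t1 := hmod (q', Sum.inr r')
      rw [h, hmod (q, Sum.inl r)] at t1
      have h3 : (r.val : ℕ) = N - K + r'.val := by simpa [off] using t1
      have hr := r.isLt
      omega
    -- a is supported on indices with i % N < K
    have ha_mem : a ∈ {x : Fin (ℓ * N) → ℝ |
        ∀ i : Fin (ℓ * N), ¬ (i.val % N < K) → x i = 0} := by
      intro i hi
      rw [ha_def, Finset.sum_apply]
      apply Finset.sum_eq_zero
      intro p _
      have hnei : i ≠ idx (p.1, Sum.inl p.2) := by
        intro h
        apply hi
        rw [h, hmod]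
        exact p.2.isLt
      simp [Pi.single_eq_of_ne hnei]
    -- -b is supported on indices with N - K ≤ i % N
    have hb_mem : -b ∈ {x : Fin (ℓ * N) → ℝ |
        ∀ i : Fin (ℓ * N), ¬ (N - K ≤ i.val % N) → x i = 0} := by
      intro i hi
      have hb0 : b i = 0 := by
        rw [hb_def, Finset.sum_apply]
        apply Finset.sum_eq_zero
        intro p _
        have hnei : i ≠ idx (p.1, Sum.inr p.2) := by
          intro h
          apply hi
          rw [h, hmod]
          simp only [off, Sum.elim_inr]
          omega
        simp [Pi.single_eq_of_ne hnei]
      show -b i = 0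
      rw [hb0, neg_zero]
    have hab : a = -b := hinj (Or.inl ha_mem) (Or.inr hb_mem) hFab
    -- evaluation lemmas
    have haval : ∀ (q : Fin ℓ) (r : Fin K),
        a (idx (q, Sum.inl r)) = g (q, Sum.inl r) := by
      intro q r
      rw [ha_def, Finset.sum_apply]
      rw [Finset.sum_eq_single ((q, r) : Fin ℓ × Fin K)]
      · simp
      · intro p _ hp
        have hnei : idx (q, Sum.inl r) ≠ idx (p.1, Sum.inl p.2) := by
          intro h
          apply hp
          have h2 := hidx_inj h.symm
          rw [Prod.mk.injEq] at h2
          exact Prod.ext h2.1 (Sum.inl.inj h2.2)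
        simp [Pi.single_eq_of_ne hnei]
      · simp
    have hbval : ∀ (q : Fin ℓ) (r : Fin K),
        b (idx (q, Sum.inr r)) = g (q, Sum.inr r) := by
      intro q r
      rw [hb_def, Finset.sum_apply]
      rw [Finset.sum_eq_single ((q, r) : Fin ℓ × Fin K)]
      · simp
      · intro p _ hp
        have hnei : idx (q, Sum.inr r) ≠ idx (p.1, Sum.inr p.2) := by
          intro h
          apply hp
          have h2 := hidx_inj h.symm
          rw [Prod.mk.injEq] at h2
          exact Prod.ext h2.1 (Sum.inr.inj h2.2)
        simp [Pi.single_eq_of_ne hnei]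
      · simp
    have haval0 : ∀ (q : Fin ℓ) (r : Fin K), a (idx (q, Sum.inr r)) = 0 := by
      intro q r
      rw [ha_def, Finset.sum_apply]
      apply Finset.sum_eq_zero
      intro p _
      have hnei : idx (q, Sum.inr r) ≠ idx (p.1, Sum.inl p.2) :=
        hne p.1 q p.2 r
      simp [Pi.single_eq_of_ne hnei]
    have hbval0 : ∀ (q : Fin ℓ) (r : Fin K), b (idx (q, Sum.inl r)) = 0 := by
      intro q r
      rw [hb_def, Finset.sum_apply]
      apply Finset.sum_eq_zero
      intro p _
      have hnei : idx (q, Sum.inl r) ≠ idx (p.1, Sum.inr p.2) :=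
        (hne q p.1 r p.2).symm
      simp [Pi.single_eq_of_ne hnei]
    rintro ⟨q, r | r⟩
    · have := congrFun hab (idx (q, Sum.inl r))
      rw [haval q r] at this
      simp only [Pi.neg_apply, hbval0 q r, neg_zero] at this
      exact this
    · have := congrFun hab (idx (q, Sum.inr r))
      rw [haval0 q r] at this
      simp only [Pi.neg_apply, hbval q r] at this
      linarith
  have hcard := hli.fintype_card_le_finrank
  rw [Module.finrank_fin_fun] at hcard
  simp only [Fintype.card_prod, Fintype.card_sum, Fintype.card_fin] at hcard
  calc 2 * ℓ * K = ℓ * (K + K) := by ring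
    _ ≤ k := hcard
end
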